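/- arXiv:1907.06278 — 2 statements merged into one kernel-verified Lean document; each statement's English description precedes it below -/
import Mathlib

section
/- The space E of strictly positive continuous functions on the torus with unit integral is a complete metric space under Hilbert's projective metric d_H. -/
noncomputable section
open MeasureTheory Filter

/-- The `d`-dimensional torus. -/
abbrev Torus (d : ℕ) := Fin d → AddCircle (1 : ℝ)

/-- `M(f,g) = inf {λ ≥ 0 : f ≤ λ g}` (pointwise order). -/
def Mcoef {d : ℕ} (f g : Torus d → ℝ) : ℝ :=
  sInf {l : ℝ | 0 ≤ l ∧ ∀ x, f x ≤ l * g x}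

/-- `m(f,g) = sup {μ ≥ 0 : μ g ≤ f}` (pointwise order). -/
def mcoef {d : ℕ} (f g : Torus d → ℝ) : ℝ :=
  sSup {m : ℝ | 0 ≤ m ∧ ∀ x, m * g x ≤ f x}

/-- Hilbert's projective distance. -/
def dH {d : ℕ} (f g : Torus d → ℝ) : ℝ :=
  Real.log (Mcoef f g) - Real.log (mcoef f g)

/-!
Taking logarithms identifies `E` with the set of `v ∈ C(𝕋^d, ℝ)` satisfying `∫ exp v = 1`.
For `f = exp v` and `g = exp w` one has `m(f, g) ≤ f / g ≤ M(f, g)` pointwise and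
`exp (-‖v - w‖∞) ≤ m(f, g)`, `M(f, g) ≤ exp ‖v - w‖∞`, while integrating `m g ≤ f ≤ M g` gives
`m(f, g) ≤ 1 ≤ M(f, g)`; hence `‖v - w‖∞ ≤ d_H(f, g) ≤ 2 ‖v - w‖∞`. A `d_H`-Cauchy sequence thus
has logarithms converging uniformly to some `L`, the constraint `∫ exp v = 1` passes to the limit
because `v ↦ ∫ exp v` is continuous on `C(𝕋^d, ℝ)`, and `exp L` is the `d_H`-limit.
-/

open MeasureTheory Filter

theorem ContinuousMap.continuous_integral {X : Type*} [TopologicalSpace X] [CompactSpace X]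
    [MeasurableSpace X] [BorelSpace X] (μ : Measure X) [IsFiniteMeasure μ] :
    Continuous fun f : C(X, ℝ) => ∫ x, f x ∂μ := by
  convert (MeasureTheory.continuous_integral (μ := μ) (G := ℝ)).comp
    (ContinuousMap.toLp (E := ℝ) 1 μ ℝ).continuous using 2 with f
  exact integral_congr_ae (ContinuousMap.coeFn_toLp μ f).symm

namespace Hilbert

variable {d : ℕ} {f g : Torus d → ℝ}

theorem integrable_of_continuous (hf : Continuous f) : Integrable f :=
  hf.integrable_of_hasCompactSupport (.of_compactSpace f)

theorem Mcoef_le {l : ℝ} (hl : 0 ≤ l) (h : ∀ x, f x ≤ l * g x) : Mcoef f g ≤ l :=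
  csInf_le ⟨0, fun _ hl => hl.1⟩ ⟨hl, h⟩

theorem le_mcoef (hg : ∀ x, 0 < g x) {l : ℝ} (hl : 0 ≤ l) (h : ∀ x, l * g x ≤ f x) :
    l ≤ mcoef f g := by
  obtain ⟨x₀⟩ : Nonempty (Torus d) := inferInstance
  exact le_csSup ⟨f x₀ / g x₀, fun m hm => (le_div_iff₀ (hg x₀)).2 (hm.2 x₀)⟩ ⟨hl, h⟩

theorem mcoef_mul_le (hf : ∀ x, 0 ≤ f x) (hg : ∀ x, 0 < g x) (x : Torus d) :
    mcoef f g * g x ≤ f x := by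
  refine (le_div_iff₀ (hg x)).1 (csSup_le ⟨0, le_rfl, fun y => by simpa using hf y⟩ ?_)
  exact fun m hm => (le_div_iff₀ (hg x)).2 (hm.2 x)

theorem le_Mcoef_mul (hf : Continuous f) (hg : Continuous g) (hg₀ : ∀ x, 0 < g x)
    (x : Torus d) : f x ≤ Mcoef f g * g x := by
  obtain ⟨C, hC⟩ := (isCompact_range (hf.div hg fun y => (hg₀ y).ne')).bddAbove
  have hbound : ∀ y, f y ≤ max C 0 * g y := fun y =>
    (div_le_iff₀ (hg₀ y)).1 ((hC ⟨y, rfl⟩).trans (le_max_left C 0))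
  refine (div_le_iff₀ (hg₀ x)).1 (le_csInf ⟨max C 0, le_max_right C 0, hbound⟩ ?_)
  exact fun l hl => (div_le_iff₀ (hg₀ x)).2 (hl.2 x)

theorem Mcoef_pos (hf : Continuous f) (hg : Continuous g) (hf₀ : ∀ x, 0 < f x)
    (hg₀ : ∀ x, 0 < g x) : 0 < Mcoef f g := by
  obtain ⟨x₀⟩ : Nonempty (Torus d) := inferInstance
  exact pos_of_mul_pos_left ((hf₀ x₀).trans_le (le_Mcoef_mul hf hg hg₀ x₀)) (hg₀ x₀).le

theorem mcoef_pos (hf : Continuous f) (hg : Continuous g) (hf₀ : ∀ x, 0 < f x)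
    (hg₀ : ∀ x, 0 < g x) : 0 < mcoef f g := by
  obtain ⟨x₀, -, hmin⟩ := isCompact_univ.exists_isMinOn Set.univ_nonempty
    (hf.div hg fun y => (hg₀ y).ne').continuousOn
  refine (div_pos (hf₀ x₀) (hg₀ x₀)).trans_le (le_mcoef hg₀ (div_pos (hf₀ x₀) (hg₀ x₀)).le ?_)
  exact fun x => (le_div_iff₀ (hg₀ x)).1 (hmin (Set.mem_univ x))

theorem one_le_Mcoef (hf : Continuous f) (hg : Continuous g) (hg₀ : ∀ x, 0 < g x)
    (hf₁ : ∫ x, f x = 1) (hg₁ : ∫ x, g x = 1) : 1 ≤ Mcoef f g := by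
  have := integral_mono (integrable_of_continuous hf)
    ((integrable_of_continuous hg).const_mul (Mcoef f g)) (le_Mcoef_mul hf hg hg₀)
  rwa [hf₁, integral_const_mul, hg₁, mul_one] at this

theorem mcoef_le_one (hf : Continuous f) (hg : Continuous g) (hf₀ : ∀ x, 0 ≤ f x)
    (hg₀ : ∀ x, 0 < g x) (hf₁ : ∫ x, f x = 1) (hg₁ : ∫ x, g x = 1) : mcoef f g ≤ 1 := by
  have := integral_mono ((integrable_of_continuous hg).const_mul (mcoef f g))
    (integrable_of_continuous hf) (mcoef_mul_le hf₀ hg₀)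
  rwa [hf₁, integral_const_mul, hg₁, mul_one] at this

open Real

theorem isClosed_setOf_integral_exp_eq_one :
    IsClosed {v : C(Torus d, ℝ) | ∫ x, exp (v x) = 1} :=
  isClosed_eq ((ContinuousMap.continuous_integral volume).comp
    (ContinuousMap.continuous_postcomp ⟨exp, continuous_exp⟩)) continuous_const

variable (v w : C(Torus d, ℝ))

theorem sub_le_log_Mcoef (x : Torus d) : v x - w x ≤ log (Mcoef (exp ∘ v) (exp ∘ w)) := by
  have hM : 0 < Mcoef (exp ∘ v) (exp ∘ w) :=
    Mcoef_pos (by fun_prop) (by fun_prop) (fun y => exp_pos (v y)) fun y => exp_pos (w y)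
  rw [le_log_iff_exp_le hM, exp_sub, div_le_iff₀ (exp_pos _)]
  exact le_Mcoef_mul (f := exp ∘ v) (by fun_prop) (by fun_prop) (fun y => exp_pos (w y)) x

theorem log_mcoef_le_sub (x : Torus d) : log (mcoef (exp ∘ v) (exp ∘ w)) ≤ v x - w x := by
  have hm : 0 < mcoef (exp ∘ v) (exp ∘ w) :=
    mcoef_pos (by fun_prop) (by fun_prop) (fun y => exp_pos (v y)) fun y => exp_pos (w y)
  rw [log_le_iff_le_exp hm, exp_sub, le_div_iff₀ (exp_pos _)]
  exact mcoef_mul_le (fun y => (exp_pos (v y)).le) (fun y => exp_pos (w y)) x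

theorem dH_exp_le : dH (exp ∘ v) (exp ∘ w) ≤ 2 * dist v w := by
  have hvw (x : Torus d) : |v x - w x| ≤ dist v w := by
    simpa only [Real.dist_eq] using ContinuousMap.dist_apply_le_dist (f := v) (g := w) x
  have hM : log (Mcoef (exp ∘ v) (exp ∘ w)) ≤ dist v w := by
    rw [← log_exp (dist v w)]
    refine log_le_log (Mcoef_pos (by fun_prop) (by fun_prop) (fun y => exp_pos (v y))
      fun y => exp_pos (w y)) (Mcoef_le (exp_pos _).le fun x => ?_)
    show exp (v x) ≤ exp (dist v w) * exp (w x)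
    rw [← exp_add, exp_le_exp]
    linarith [(abs_le.1 (hvw x)).2]
  have hm : -dist v w ≤ log (mcoef (exp ∘ v) (exp ∘ w)) := by
    rw [← log_exp (-dist v w)]
    refine log_le_log (exp_pos _) (le_mcoef (fun y => exp_pos (w y)) (exp_pos _).le fun x => ?_)
    show exp (-dist v w) * exp (w x) ≤ exp (v x)
    rw [← exp_add, exp_le_exp]
    linarith [(abs_le.1 (hvw x)).1]
  unfold dH
  linarith

theorem dist_le_dH_exp (hv : ∫ x, exp (v x) = 1) (hw : ∫ x, exp (w x) = 1) :
    dist v w ≤ dH (exp ∘ v) (exp ∘ w) := by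
  have hM : 0 ≤ log (Mcoef (exp ∘ v) (exp ∘ w)) :=
    log_nonneg (one_le_Mcoef (by fun_prop) (by fun_prop) (fun y => exp_pos (w y)) hv hw)
  have hm : log (mcoef (exp ∘ v) (exp ∘ w)) ≤ 0 :=
    log_nonpos (mcoef_pos (by fun_prop) (by fun_prop) (fun y => exp_pos (v y))
      fun y => exp_pos (w y)).le
      (mcoef_le_one (by fun_prop) (by fun_prop) (fun y => (exp_pos (v y)).le)
        (fun y => exp_pos (w y)) hv hw)
  refine ContinuousMap.dist_le_iff_of_nonempty.2 fun x => ?_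
  rw [dist_eq, abs_le, dH]
  constructor <;> linarith [sub_le_log_Mcoef v w x, log_mcoef_le_sub v w x]

end Hilbert

open Hilbert

/-- The set `E` of strictly positive continuous functions on the torus with unit
integral is complete under Hilbert's projective metric: every Cauchy sequence
(with respect to `d_H`) converges in `E` with respect to `d_H`. -/
theorem stmt2 (d : ℕ) (u : ℕ → C(Torus d, ℝ))
    (hpos : ∀ n ω, 0 < u n ω) (hint : ∀ n, ∫ x, u n x = 1)
    (hcauchy : ∀ ε > (0 : ℝ), ∃ N, ∀ m ≥ N, ∀ n ≥ N, dH (⇑(u m)) (⇑(u n)) < ε) :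
    ∃ f : C(Torus d, ℝ), (∀ x, 0 < f x) ∧ (∫ x, f x = 1) ∧
      Tendsto (fun n => dH (⇑(u n)) (⇑f)) atTop (nhds 0) := by
  let v (n : ℕ) : C(Torus d, ℝ) := ⟨fun x => Real.log (u n x),
    (u n).continuous.log fun x => (hpos n x).ne'⟩
  have hu (n : ℕ) : ⇑(u n) = Real.exp ∘ v n := funext fun x => (Real.exp_log (hpos n x)).symm
  simp only [hu] at hint hcauchy ⊢
  have hv : CauchySeq v := Metric.cauchySeq_iff.2 fun ε hε =>
    (hcauchy ε hε).imp fun _ hN m hm n hn =>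
      (dist_le_dH_exp (v m) (v n) (hint m) (hint n)).trans_lt (hN m hm n hn)
  obtain ⟨L, hL⟩ := cauchySeq_tendsto_of_complete hv
  have hL₁ : ∫ x, Real.exp (L x) = 1 :=
    isClosed_setOf_integral_exp_eq_one.mem_of_tendsto hL (Eventually.of_forall hint)
  refine ⟨⟨Real.exp ∘ L, by fun_prop⟩, fun x => Real.exp_pos (L x), hL₁, ?_⟩
  refine squeeze_zero (fun n => dist_nonneg.trans (dist_le_dH_exp (v n) L (hint n) hL₁))
    (fun n => dH_exp_le (v n) L) ?_
  simpa using (tendsto_iff_dist_tendsto_zero.1 hL).const_mul 2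
end
end

section
/- Let (E, d) be a complete metric space, (Ω, F, P, θ) an ergodic invertible measure-preserving discrete dynamical system, and A(ω) : E → E measurable maps that are weak contractions (Lipschitz constant τ(A(ω)) ≤ 1) with E[log τ(A)] < 0. Define the cocycle φ_n(ω) = A(θ^{n-1}ω) ∘ ⋯ ∘ A(ω). Then for almost every ω, limsup_{n→∞} (1/n) log sup_{f,g ∈ E, f≠g} d(φ_n(ω)f, φ_n(ω)g) ≤ E[log τ(A)] < 0, provided the diameters sup_{f,g} d(φ_n(ω)f, φ_n(ω)g) are finite. -/
noncomputable section
open MeasureTheory Filter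

/-- Extended-real logarithm: `log x` for `x > 0`, and `-∞` for `x ≤ 0`. -/
def elog (x : ℝ) : EReal := if x ≤ 0 then ⊥ else ((Real.log x : ℝ) : EReal)

/-- Truncated logarithm `max(log x, -M)`, with value `-M` for `x ≤ 0`. -/
def truncLog (M x : ℝ) : ℝ := if x ≤ 0 then -M else max (Real.log x) (-M)

/-!
Since `τ ≤ exp (truncLog M ∘ τ)` and `A ω` is `τ ω`-Lipschitz, the diameter of the image of
`φ n ω` is at most `exp (∑_{k<n} truncLog M (τ (θ^k ω)))` times that of `φ 0 ω`. So it suffices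
to bound, for each `M`, the limsup of the Birkhoff averages of the bounded observable
`truncLog M ∘ τ` by its integral: the upper half of Birkhoff's ergodic theorem. The limsup of the
averages is `θ`-invariant, hence a.e. equal to a constant `c` by ergodicity, and the
Katznelson–Weiss covering argument, which cuts orbits greedily into blocks of average at least
`c - δ`, gives `c - δ ≤ ∫ g`.
-/

open Finset Topology

theorem limsup_le_limsup_of_tendsto_sub {ι : Type*} {l : Filter ι} [l.NeBot] {u v : ι → ℝ}
    (hv : IsBoundedUnder (· ≤ ·) l fun i => |v i|) (h : Tendsto (fun i => u i - v i) l (𝓝 0)) :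
    limsup u l ≤ limsup v l := by
  rw [isBoundedUnder_le_abs] at hv
  calc limsup u l = limsup (v + (u - v)) l := by rw [add_sub_cancel]
    _ ≤ limsup v l + limsup (u - v) l :=
      limsup_add_le hv.2 hv.1 h.isCoboundedUnder_le h.isBoundedUnder_le
    _ = limsup v l := by rw [show limsup (u - v) l = 0 from h.limsup_eq, add_zero]

theorem le_of_forall_natCast_mul_le_add {𝕜 : Type*} [Field 𝕜] [LinearOrder 𝕜]
    [IsStrictOrderedRing 𝕜] [Archimedean 𝕜] {a b c : 𝕜} (h : ∀ n : ℕ, n * a ≤ n * b + c) :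
    a ≤ b := by
  by_contra! hba
  obtain ⟨n, hn⟩ := exists_nat_gt (c / (a - b))
  rw [div_lt_iff₀ (sub_pos.2 hba)] at hn
  nlinarith [h n]

theorem Measurable.birkhoffSum {α M : Type*} [MeasurableSpace α] [AddCommMonoid M]
    [MeasurableSpace M] [MeasurableAdd₂ M] {f : α → α} {g : α → M} (hf : Measurable f)
    (hg : Measurable g) (n : ℕ) : Measurable (birkhoffSum f g n) :=
  Finset.measurable_sum _ fun k _ => hg.comp (hf.iterate k)

section BirkhoffSum

variable {α : Type*} {f : α → α} {g : α → ℝ} {K : ℝ}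

theorem natCast_mul_birkhoffAverage (n : ℕ) (x : α) :
    n * birkhoffAverage ℝ f g n x = birkhoffSum f g n x := by
  rcases n.eq_zero_or_pos with rfl | hn
  · simp
  · rw [birkhoffAverage, smul_eq_mul, ← mul_assoc, mul_inv_cancel₀ (by positivity), one_mul]

theorem abs_birkhoffAverage_le (hK : ∀ y, |g y| ≤ K) (n : ℕ) (x : α) :
    |birkhoffAverage ℝ f g n x| ≤ K := by
  rw [birkhoffAverage, birkhoffSum, smul_eq_mul, abs_mul, abs_inv, Nat.abs_cast]
  rcases n.eq_zero_or_pos with rfl | hn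
  · simpa using (abs_nonneg _).trans (hK x)
  rw [inv_mul_le_iff₀ (by positivity)]
  calc |∑ k ∈ range n, g (f^[k] x)| ≤ ∑ k ∈ range n, |g (f^[k] x)| := abs_sum_le_sum_abs _ _
    _ ≤ ∑ _k ∈ range n, K := sum_le_sum fun k _ => hK (f^[k] x)
    _ = n * K := by simp

theorem isBoundedUnder_abs_birkhoffAverage (hK : ∀ y, |g y| ≤ K) (x : α) :
    IsBoundedUnder (· ≤ ·) atTop fun n => |birkhoffAverage ℝ f g n x| :=
  isBoundedUnder_of ⟨K, fun n => abs_birkhoffAverage_le hK n x⟩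

theorem limsup_birkhoffAverage_apply_eq (hK : ∀ y, |g y| ≤ K) (x : α) :
    limsup (birkhoffAverage ℝ f g · (f x)) atTop = limsup (birkhoffAverage ℝ f g · x) atTop := by
  have hg : Bornology.IsBounded (Set.range g) :=
    isBounded_iff_forall_norm_le.2 ⟨K, by rintro _ ⟨y, rfl⟩; exact hK y⟩
  have hsub := tendsto_birkhoffAverage_apply_sub_birkhoffAverage' ℝ hg f x
  refine le_antisymm (limsup_le_limsup_of_tendsto_sub
    (isBoundedUnder_abs_birkhoffAverage hK x) hsub) (limsup_le_limsup_of_tendsto_sub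
    (isBoundedUnder_abs_birkhoffAverage hK (f x)) ?_)
  simpa using hsub.neg

theorem sub_le_birkhoffSum_of_forall_exists_le {h : α → ℝ} {r C : ℝ} {N : ℕ} (hC : 0 ≤ C)
    (h_ge : ∀ y, r - C ≤ h y) (hblock : ∀ y, ∃ n ∈ Icc 1 N, n * r ≤ birkhoffSum f h n y)
    (L : ℕ) (x : α) : L * r - N * C ≤ birkhoffSum f h L x := by
  induction L using Nat.strong_induction_on generalizing x with
  | _ L ih =>
    obtain ⟨n, hn, hrn⟩ := hblock x
    rw [mem_Icc] at hn
    by_cases hLn : L < n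
    · have hLN : (L : ℝ) ≤ N := by exact_mod_cast (hLn.trans_le hn.2).le
      calc L * r - N * C ≤ L * r - L * C := by gcongr
        _ = ∑ _k ∈ range L, (r - C) := by simp
        _ ≤ birkhoffSum f h L x := sum_le_sum fun k _ => h_ge _
    · obtain ⟨m, rfl⟩ := Nat.exists_eq_add_of_le (not_lt.1 hLn)
      have := ih m (by omega) (f^[n] x)
      rw [birkhoffSum_add]
      push_cast at this ⊢
      linarith

variable [MeasurableSpace α] {μ : Measure α}

theorem MeasureTheory.MeasurePreserving.integrable_birkhoffSum (hf : MeasurePreserving f μ μ)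
    (hg : Integrable g μ) (n : ℕ) : Integrable (birkhoffSum f g n) μ :=
  integrable_finsetSum _ fun k _ => (hf.iterate k).integrable_comp_of_integrable hg

theorem MeasureTheory.MeasurePreserving.integral_birkhoffSum (hf : MeasurePreserving f μ μ)
    (hg : Integrable g μ) (n : ℕ) : ∫ x, birkhoffSum f g n x ∂μ = n * ∫ x, g x ∂μ := by
  have hcomp : ∀ k, ∫ x, g (f^[k] x) ∂μ = ∫ x, g x ∂μ := fun k => by
    have hmap := (hf.iterate k).map_eq
    rw [← integral_map (hf.iterate k).aemeasurable (by rw [hmap]; exact hg.aestronglyMeasurable),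
      hmap]
  simp only [_root_.birkhoffSum]
  rw [integral_finsetSum (f := fun k x => g (f^[k] x)) _
    fun k _ => (hf.iterate k).integrable_comp_of_integrable hg]
  simp [hcomp]

end BirkhoffSum

section ProbabilityPreserving

variable {α : Type*} [MeasurableSpace α] {μ : Measure α} [IsProbabilityMeasure μ]
  {f : α → α} {g : α → ℝ} {K r : ℝ}

theorem le_integral_add_measureReal (hf : MeasurePreserving f μ μ) (hgm : Measurable g)
    (hgi : Integrable g μ) (hgK : ∀ x, -K ≤ g x) {N : ℕ} (hN : 0 < N) :
    r ≤ ∫ x, g x ∂μ +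
      (|K| + |r|) * μ.real {x | ∀ n ∈ Icc 1 N, birkhoffSum f g n x < n * r} := by
  set A := {x | ∀ n ∈ Icc 1 N, birkhoffSum f g n x < n * r}
  set C := |K| + |r|
  have hA : MeasurableSet A := by
    simp only [A, Set.ofPred_forall]
    exact .iInter fun n => .iInter fun _ =>
      measurableSet_lt (hf.measurable.birkhoffSum hgm n) measurable_const
  -- Raising `g` by `C` on `A` makes every point start a block of average at least `r`.
  set h := g + A.indicator fun _ => C
  have hC : 0 ≤ C := by positivity
  have hgh : ∀ n x, birkhoffSum f g n x ≤ birkhoffSum f h n x := fun n x => by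
    rw [birkhoffSum_add']
    exact le_add_of_nonneg_right (sum_nonneg fun k _ => Set.indicator_nonneg (fun _ _ => hC) _)
  have hrC : r - C ≤ -K := by simp only [C]; linarith [le_abs_self K, le_abs_self r]
  have h_ge : ∀ y, r - C ≤ h y := fun y =>
    hrC.trans <| (hgK y).trans <| le_add_of_nonneg_right <| Set.indicator_nonneg (fun _ _ => hC) y
  have hblock : ∀ y, ∃ n ∈ Icc 1 N, n * r ≤ birkhoffSum f h n y := fun y => by
    by_cases hy : y ∈ A
    · refine ⟨1, mem_Icc.2 ⟨le_rfl, hN⟩, ?_⟩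
      simp only [birkhoffSum_one, h, Pi.add_apply, Set.indicator_of_mem hy, Nat.cast_one]
      linarith [hgK y]
    · simp only [A, Set.mem_ofPred_eq, not_forall, not_lt] at hy
      obtain ⟨n, hn, hrn⟩ := hy
      exact ⟨n, hn, hrn.trans (hgh n y)⟩
  have hhi : Integrable h μ := hgi.add ((integrable_const C).indicator hA)
  have hint : ∫ x, h x ∂μ = ∫ x, g x ∂μ + C * μ.real A := by
    rw [integral_add' hgi ((integrable_const C).indicator hA), integral_indicator_const C hA,
      smul_eq_mul, mul_comm]
  rw [← hint]
  refine le_of_forall_natCast_mul_le_add (c := N * C) fun L => ?_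
  calc L * r = ∫ _, (L * r - N * C) ∂μ + N * C := by simp
    _ ≤ ∫ x, birkhoffSum f h L x ∂μ + N * C := add_le_add_left
      (integral_mono (integrable_const _) (hf.integrable_birkhoffSum hhi L)
        (sub_le_birkhoffSum_of_forall_exists_le hC h_ge hblock L)) _
    _ = L * ∫ x, h x ∂μ + N * C := by rw [hf.integral_birkhoffSum hhi]

theorem le_integral_of_ae_exists_le_birkhoffSum (hf : MeasurePreserving f μ μ)
    (hgm : Measurable g) (hgi : Integrable g μ) (hgK : ∀ x, -K ≤ g x)
    (hr : ∀ᵐ x ∂μ, ∃ n, 0 < n ∧ n * r ≤ birkhoffSum f g n x) : r ≤ ∫ x, g x ∂μ := by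
  set A : ℕ → Set α := fun N => {x | ∀ n ∈ Icc 1 N, birkhoffSum f g n x < n * r}
  have hA : ∀ N, MeasurableSet (A N) := fun N => by
    simp only [A, Set.ofPred_forall]
    exact .iInter fun n => .iInter fun _ =>
      measurableSet_lt (hf.measurable.birkhoffSum hgm n) measurable_const
  have hanti : Antitone A := fun N N' hNN' x hx n hn =>
    hx n (mem_Icc.2 ⟨(mem_Icc.1 hn).1, (mem_Icc.1 hn).2.trans hNN'⟩)
  have hnull : μ (⋂ N, A N) = 0 := by
    refine measure_mono_null ?_ (ae_iff.1 hr)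
    rintro x hx ⟨n, hn, hrn⟩
    exact (hrn.trans_lt (Set.mem_iInter.1 hx n n (mem_Icc.2 ⟨hn, le_rfl⟩))).false
  have hlim : Tendsto (fun N => μ.real (A N)) atTop (𝓝 0) := by
    have := tendsto_measure_iInter_atTop (fun N => (hA N).nullMeasurableSet) hanti
      ⟨0, measure_ne_top μ _⟩
    rw [hnull] at this
    exact (ENNReal.tendsto_toReal ENNReal.zero_ne_top).comp this
  have := (tendsto_const_nhds (x := ∫ x, g x ∂μ)).add (hlim.const_mul (|K| + |r|))
  rw [mul_zero, add_zero] at this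
  exact ge_of_tendsto this <| (eventually_gt_atTop 0).mono fun N hN =>
    le_integral_add_measureReal hf hgm hgi hgK hN

theorem Ergodic.ae_limsup_birkhoffAverage_le_integral (hf : Ergodic f μ) (hgm : Measurable g)
    (hK : ∀ y, |g y| ≤ K) :
    ∀ᵐ x ∂μ, limsup (birkhoffAverage ℝ f g · x) atTop ≤ ∫ x, g x ∂μ := by
  have hmeas : Measurable fun x => limsup (birkhoffAverage ℝ f g · x) atTop :=
    .limsup fun n => (hf.measurable.birkhoffSum hgm n).const_mul ((n:ℝ)⁻¹)
  obtain ⟨c, hc⟩ := hf.toPreErgodic.ae_eq_const_of_ae_eq_comp hmeas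
    (funext (limsup_birkhoffAverage_apply_eq hK))
  suffices c ≤ ∫ x, g x ∂μ from hc.mono fun x hx => hx.trans_le this
  have hgi : Integrable g μ :=
    .of_bound hgm.aestronglyMeasurable K <|
      .of_forall fun y => (Real.norm_eq_abs _).trans_le (hK y)
  refine le_of_forall_sub_le fun δ hδ => le_integral_of_ae_exists_le_birkhoffSum
    hf.toMeasurePreserving hgm hgi (fun y => neg_le_of_abs_le (hK y)) ?_
  filter_upwards [hc] with x hx
  have hlt : c - δ < limsup (birkhoffAverage ℝ f g · x) atTop := by
    rw [hx]; exact sub_lt_self c hδ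
  have hcobdd := (isBoundedUnder_le_abs.1 (isBoundedUnder_abs_birkhoffAverage (f := f) hK x)).2
  obtain ⟨n, hcn, hn⟩ := ((frequently_lt_of_lt_limsup hcobdd.isCoboundedUnder_le hlt)
    |>.and_eventually (eventually_gt_atTop 0)).exists
  refine ⟨n, hn, ?_⟩
  rw [← natCast_mul_birkhoffAverage]
  exact mul_le_mul_of_nonneg_left hcn.le n.cast_nonneg

end ProbabilityPreserving

theorem ergodic_of_measure_eq_zero_or_one {α : Type*} [MeasurableSpace α] {μ : Measure α}
    [IsProbabilityMeasure μ] {f : α → α} (hf : MeasurePreserving f μ μ)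
    (h : ∀ s, MeasurableSet s → f ⁻¹' s = s → μ s = 0 ∨ μ s = 1) : Ergodic f μ :=
  ⟨hf, ⟨fun s hs hfs => eventuallyConst_set'.2 <| (h s hs hfs).imp ae_eq_empty.2
    fun h1 => ae_eq_univ.2 ((prob_compl_eq_zero_iff hs).2 h1)⟩⟩

theorem measurable_truncLog (M : ℝ) : Measurable (truncLog M) :=
  Measurable.ite measurableSet_Iic measurable_const (Real.measurable_log.max measurable_const)

theorem abs_truncLog_le {M x : ℝ} (hM : 0 ≤ M) (hx : x ≤ 1) : |truncLog M x| ≤ M := by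
  unfold truncLog
  split_ifs with h
  · rw [abs_neg, abs_of_nonneg hM]
  · exact abs_le.2 ⟨le_max_right _ _, max_le ((Real.log_nonpos (not_le.1 h).le hx).trans hM)
      (by linarith)⟩

theorem le_exp_truncLog (M x : ℝ) : x ≤ Real.exp (truncLog M x) := by
  unfold truncLog
  split_ifs with h
  · exact h.trans (Real.exp_pos _).le
  · calc x = Real.exp (Real.log x) := (Real.exp_log (not_le.1 h)).symm
      _ ≤ _ := Real.exp_le_exp.2 (le_max_left _ _)

theorem prod_le_exp_birkhoffSum {α : Type*} {f : α → α} {u v : α → ℝ} (hu : ∀ y, 0 ≤ u y)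
    (huv : ∀ y, u y ≤ Real.exp (v y)) (n : ℕ) (x : α) :
    ∏ k ∈ range n, u (f^[k] x) ≤ Real.exp (birkhoffSum f v n x) := by
  rw [birkhoffSum, Real.exp_sum]
  exact prod_le_prod (fun k _ => hu _) fun k _ => huv _

theorem diam_range_le_prod_mul {E : Type*} [PseudoMetricSpace E] {ψ B : ℕ → E → E} {c : ℕ → ℝ}
    (hc : ∀ n, 0 ≤ c n) (hB : ∀ n x y, dist (B n x) (B n y) ≤ c n * dist x y)
    (hψ : ∀ n, ψ (n + 1) = B n ∘ ψ n) (hbdd : ∀ n, Bornology.IsBounded (Set.range (ψ n)))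
    (n : ℕ) :
    Metric.diam (Set.range (ψ n)) ≤ (∏ k ∈ range n, c k) * Metric.diam (Set.range (ψ 0)) := by
  induction n with
  | zero => simp
  | succ n ih =>
    have hlip : LipschitzWith ⟨c n, hc n⟩ (B n) := .of_dist_le_mul (hB n)
    calc Metric.diam (Set.range (ψ (n + 1))) ≤ c n * Metric.diam (Set.range (ψ n)) := by
          rw [hψ, Set.range_comp]; exact hlip.diam_image_le _ (hbdd n)
      _ ≤ c n * ((∏ k ∈ range n, c k) * Metric.diam (Set.range (ψ 0))) := by gcongr; exact hc n
      _ = _ := by rw [prod_range_succ]; ring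

-- For `D ≤ 0` the junk value `Real.log D` is harmless: then `d ≤ 0`, so `elog d = ⊥`.
theorem inv_mul_elog_le {n : ℕ} (hn : 0 < n) {d D a : ℝ} (h : d ≤ Real.exp (n * a) * D) :
    (((n : ℝ)⁻¹ : ℝ) : EReal) * elog d ≤ ((a + Real.log D / n : ℝ) : EReal) := by
  unfold elog
  split_ifs with hd
  · rw [EReal.mul_bot_of_pos (EReal.coe_pos.2 (by positivity))]
    exact bot_le
  · have hd : 0 < d := not_le.1 hd
    have hD : 0 < D := pos_of_mul_pos_right (hd.trans_le h) (Real.exp_pos _).le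
    have hlog : Real.log d ≤ n * a + Real.log D := by
      simpa [Real.log_mul (Real.exp_pos _).ne' hD.ne'] using Real.log_le_log hd h
    rw [← EReal.coe_mul, EReal.coe_le_coe_iff, inv_mul_le_iff₀ (by positivity)]
    calc Real.log d ≤ n * a + Real.log D := hlog
      _ = n * (a + Real.log D / n) := by field_simp

theorem limsup_inv_mul_elog_le {d s : ℕ → ℝ} {D I : ℝ} (hs : limsup s atTop ≤ I)
    (hs_bdd : IsBoundedUnder (· ≤ ·) atTop s) (hd : ∀ n : ℕ, d n ≤ Real.exp (n * s n) * D) :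
    limsup (fun n : ℕ => (((n : ℝ)⁻¹ : ℝ) : EReal) * elog (d n)) atTop ≤ I := by
  refine EReal.le_of_forall_lt_iff_le.1 fun z hz => ?_
  have hIz : I < z := EReal.coe_lt_coe_iff.1 hz
  have hε : 0 < (z - I) / 2 := by linarith
  refine limsup_le_of_le (by isBoundedDefault) ?_
  filter_upwards [eventually_lt_of_limsup_lt (hs.trans_lt (by linarith : I < I + (z - I) / 2))
      hs_bdd,
    (tendsto_const_div_atTop_nhds_zero_nat (Real.log D)).eventually (gt_mem_nhds hε),
    eventually_gt_atTop 0] with n hsn hDn hn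
  exact (inv_mul_elog_le hn (hd n)).trans (EReal.coe_le_coe_iff.2 (by linarith))

theorem stmt9_general {Ω : Type*} [MeasurableSpace Ω] (P : Measure Ω)
    [IsProbabilityMeasure P] (θ : Ω ≃ᵐ Ω)
    (hmp : MeasurePreserving (⇑θ) P P)
    (herg : ∀ s : Set Ω, MeasurableSet s → (⇑θ) ⁻¹' s = s → P s = 0 ∨ P s = 1)
    {E : Type*} [MetricSpace E]
    (A : Ω → E → E) (τ : Ω → ℝ) (hτm : Measurable τ)
    (hτ01 : ∀ ω, τ ω ∈ Set.Icc (0:ℝ) 1)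
    (hcontr : ∀ ω x y, dist (A ω x) (A ω y) ≤ τ ω * dist x y)
    (φ : ℕ → Ω → E → E)
    (hφs : ∀ n ω, φ (n + 1) ω = A ((⇑θ)^[n] ω) ∘ φ n ω)
    (hbdd : ∀ ω n, Bornology.IsBounded (Set.range (φ n ω))) :
    ∀ᵐ ω ∂P, limsup
        (fun n : ℕ => (((n : ℝ)⁻¹ : ℝ) : EReal) *
          elog (Metric.diam (Set.range (φ n ω)))) atTop ≤
      ⨅ M : ℕ, ((∫ ω, truncLog (M : ℝ) (τ ω) ∂P : ℝ) : EReal) := by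
  have hθ : Ergodic θ P := ergodic_of_measure_eq_zero_or_one hmp herg
  have key : ∀ M : ℕ, ∀ᵐ ω ∂P, limsup (fun n : ℕ => (((n : ℝ)⁻¹ : ℝ) : EReal) *
      elog (Metric.diam (Set.range (φ n ω)))) atTop ≤
        ((∫ ω, truncLog M (τ ω) ∂P : ℝ) : EReal) := by
    intro M
    have hK : ∀ ω, |truncLog M (τ ω)| ≤ M := fun ω => abs_truncLog_le M.cast_nonneg (hτ01 ω).2
    filter_upwards [hθ.ae_limsup_birkhoffAverage_le_integral ((measurable_truncLog M).comp hτm) hK]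
      with ω hω
    refine limsup_inv_mul_elog_le (D := Metric.diam (Set.range (φ 0 ω))) hω
      (isBoundedUnder_le_abs.1 (isBoundedUnder_abs_birkhoffAverage hK ω)).1 fun n => ?_
    rw [natCast_mul_birkhoffAverage]
    calc Metric.diam (Set.range (φ n ω))
        ≤ (∏ k ∈ range n, τ (θ^[k] ω)) * Metric.diam (Set.range (φ 0 ω)) :=
          diam_range_le_prod_mul (fun k => (hτ01 _).1) (fun k => hcontr _) (fun k => hφs k ω)
            (hbdd ω) n
      _ ≤ _ := by
          gcongr
          exact prod_le_exp_birkhoffSum (fun ω => (hτ01 ω).1)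
            (fun ω => le_exp_truncLog M (τ ω)) n ω
  filter_upwards [ae_all_iff.2 key] with ω hω using le_iInf hω

/-- Random cocycles of weak contractions on a complete metric space: if
`d(A(ω)x, A(ω)y) ≤ τ(ω) d(x,y)` with `τ ≤ 1` and `E[log τ] < 0` (possibly
`-∞`), then almost surely the diameters of the images of the cocycle
`φ_n(ω) = A(θ^{n-1}ω) ∘ ⋯ ∘ A(ω)` decay exponentially with rate at most
`E[log τ]`, provided they are finite. -/
theorem stmt9 {Ω : Type*} [MeasurableSpace Ω] (P : Measure Ω)
    [IsProbabilityMeasure P] (θ : Ω ≃ᵐ Ω)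
    (hmp : MeasurePreserving (⇑θ) P P) (hmp' : MeasurePreserving (⇑θ.symm) P P)
    (herg : ∀ s : Set Ω, MeasurableSet s → (⇑θ) ⁻¹' s = s → P s = 0 ∨ P s = 1)
    {E : Type*} [MetricSpace E] [CompleteSpace E] [Nonempty E]
    (A : Ω → E → E) (τ : Ω → ℝ) (hτm : Measurable τ)
    (hτ01 : ∀ ω, τ ω ∈ Set.Icc (0:ℝ) 1)
    (hcontr : ∀ ω x y, dist (A ω x) (A ω y) ≤ τ ω * dist x y)
    (φ : ℕ → Ω → E → E)
    (hφ0 : ∀ ω, φ 0 ω = id)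
    (hφs : ∀ n ω, φ (n + 1) ω = A ((⇑θ)^[n] ω) ∘ φ n ω)
    (hbdd : ∀ ω n, Bornology.IsBounded (Set.range (φ n ω)))
    (hI : (⨅ M : ℕ, ((∫ ω, truncLog (M : ℝ) (τ ω) ∂P : ℝ) : EReal)) < 0) :
    ∀ᵐ ω ∂P, limsup
        (fun n : ℕ => (((n : ℝ)⁻¹ : ℝ) : EReal) *
          elog (Metric.diam (Set.range (φ n ω)))) atTop ≤
      ⨅ M : ℕ, ((∫ ω, truncLog (M : ℝ) (τ ω) ∂P : ℝ) : EReal) :=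
  stmt9_general P θ hmp herg A τ hτm hτ01 hcontr φ hφs hbdd
end
end
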